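/- arXiv:2605.22307 — 2 statements merged into one kernel-verified Lean document; each statement's English description precedes it below -/
import Mathlib

section
/- For every integer n ≥ 4, the set S = {(i,i) : i ∈ [n]} ∪ {(i+1,i) : i ∈ [n−1]} ∪ {(1,n)} is a weak 3-resolving set of K_n × K_n of cardinality 2n. -/
open Finset

/-- Distance in the direct product `K_n × K_n` (per the distance formula):
`0` if equal, `1` if the two vertices differ in both coordinates, `2` otherwise. -/
def dd {n : ℕ} (x y : Fin n × Fin n) : ℕ :=
  if x = y then 0 else if x.1 ≠ y.1 ∧ x.2 ≠ y.2 then 1 else 2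

/-- `Δ_S(x,y) = Σ_{z ∈ S} |d(x,z) − d(y,z)|`. -/
def delS {n : ℕ} (S : Finset (Fin n × Fin n)) (x y : Fin n × Fin n) : ℕ :=
  ∑ z ∈ S, ((dd x z : ℤ) - (dd y z : ℤ)).natAbs

/-- `S` is a weak `k`-resolving set. -/
def weakRes {n : ℕ} (k : ℕ) (S : Finset (Fin n × Fin n)) : Prop :=
  ∀ x y : Fin n × Fin n, x ≠ y → k ≤ delS S x y

/-- The weak `k`-metric dimension of `K_n × K_n`. -/
noncomputable def wdim (n k : ℕ) : ℕ :=
  sInf {m | ∃ S : Finset (Fin n × Fin n), weakRes k S ∧ S.card = m}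

/-- Vertical layer `L_i`. -/
def Lv {n : ℕ} (i : Fin n) : Finset (Fin n × Fin n) := univ.filter (fun p => p.1 = i)

/-- Horizontal layer `L^j`. -/
def Lh {n : ℕ} (j : Fin n) : Finset (Fin n × Fin n) := univ.filter (fun p => p.2 = j)

/-- Intersecting layers `L_i^j = L_i ∪ L^j`. -/
def Lij {n : ℕ} (i j : Fin n) : Finset (Fin n × Fin n) := Lv i ∪ Lh j

def g {N : ℕ} (x y z : Fin N × Fin N) : ℕ := ((dd x z : ℤ) - (dd y z : ℤ)).natAbs
section gle
variable {N : ℕ} {x y z : Fin N × Fin N}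
lemma dd_far (h : ¬(x.1 = z.1 ∨ x.2 = z.2)) : dd x z = 1 := by
  push_neg at h
  have hne : x ≠ z := fun he => h.1 (by rw [he])
  unfold dd; rw [if_neg hne, if_pos ⟨h.1, h.2⟩]
lemma dd_near (h : x.1 = z.1 ∨ x.2 = z.2) (hne : x ≠ z) : dd x z = 2 := by
  unfold dd; rw [if_neg hne, if_neg]
  rintro ⟨h1, h2⟩; rcases h with h | h; exacts [h1 h, h2 h]
lemma dd_self (x : Fin N × Fin N) : dd x x = 0 := by unfold dd; rw [if_pos rfl]
lemma g_one (h1 : x.1 = z.1 ∨ x.2 = z.2) (h2 : ¬(y.1 = z.1 ∨ y.2 = z.2)) : 1 ≤ g x y z := by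
  have hy : dd y z = 1 := dd_far h2
  unfold g; rw [hy]
  by_cases hx : x = z
  · rw [hx, dd_self]; decide
  · rw [dd_near h1 hx]; decide
lemma g_one' (h1 : ¬(x.1 = z.1 ∨ x.2 = z.2)) (h2 : y.1 = z.1 ∨ y.2 = z.2) : 1 ≤ g x y z := by
  have hx : dd x z = 1 := dd_far h1
  unfold g; rw [hx]
  by_cases hy : y = z
  · rw [hy, dd_self]; decide
  · rw [dd_near h2 hy]; decide
lemma g_two (hx : x = z) (h2 : y.1 = z.1 ∨ y.2 = z.2) (hne : y ≠ z) : 2 ≤ g x y z := by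
  unfold g; rw [hx, dd_self, dd_near h2 hne]; decide
lemma g_two' (hy : y = z) (h2 : x.1 = z.1 ∨ x.2 = z.2) (hne : x ≠ z) : 2 ≤ g x y z := by
  unfold g; rw [hy, dd_self, dd_near h2 hne]; decide
lemma wit2 (S : Finset (Fin N × Fin N)) {z1 z2 : Fin N × Fin N}
    (m1 : z1 ∈ S) (m2 : z2 ∈ S) (h12 : z1 ≠ z2)
    (hs : 3 ≤ g x y z1 + g x y z2) : 3 ≤ delS S x y := by
  calc 3 ≤ ∑ z ∈ ({z1, z2} : Finset _), g x y z := by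
        rw [sum_insert (by simp [h12]), sum_singleton]; exact hs
    _ ≤ ∑ z ∈ S, g x y z := by
        apply sum_le_sum_of_subset
        intro t ht
        simp only [mem_insert, mem_singleton] at ht
        rcases ht with rfl | rfl <;> assumption
    _ = delS S x y := rfl
lemma wit3 (S : Finset (Fin N × Fin N)) {z1 z2 z3 : Fin N × Fin N}
    (m1 : z1 ∈ S) (m2 : z2 ∈ S) (m3 : z3 ∈ S)
    (h12 : z1 ≠ z2) (h13 : z1 ≠ z3) (h23 : z2 ≠ z3)
    (hs : 3 ≤ g x y z1 + g x y z2 + g x y z3) : 3 ≤ delS S x y := by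
  calc 3 ≤ ∑ z ∈ ({z1, z2, z3} : Finset _), g x y z := by
        rw [sum_insert (by simp [h12, h13]), sum_insert (by simp [h23]), sum_singleton]
        omega
    _ ≤ ∑ z ∈ S, g x y z := by
        apply sum_le_sum_of_subset
        intro t ht
        simp only [mem_insert, mem_singleton] at ht
        rcases ht with rfl | rfl | rfl <;> assumption
    _ = delS S x y := rfl
end gle
section ff
variable {m : ℕ}
open Fin.CommRing
lemma hone : (1 : Fin (m+4)) ≠ 0 := by simp [Fin.ext_iff]
lemma htwo : (2 : Fin (m+4)) ≠ 0 := by simp [Fin.ext_iff, Nat.mod_eq_of_lt (show 2 < m + 4 by omega)]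
lemma hsucc (j : Fin (m+4)) : j + 1 ≠ j := fun h => hone (by linear_combination h)
lemma hsucc' (j : Fin (m+4)) : j ≠ j + 1 := (hsucc j).symm
lemma hpred (j : Fin (m+4)) : j - 1 ≠ j := fun h => hone (by linear_combination -h)
lemma hpred' (j : Fin (m+4)) : j ≠ j - 1 := (hpred j).symm
lemma hpm (j : Fin (m+4)) : j + 1 ≠ j - 1 := fun h => htwo (by linear_combination h)
lemma hshift {i j : Fin (m+4)} (h : i = j + 1) : j = i - 1 := by rw [h]; ring
lemma hshift' {i j : Fin (m+4)} (h : j = i - 1) : i = j + 1 := by rw [h]; ring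
lemma hsubinj {i j : Fin (m+4)} (h : i - 1 = j - 1) : i = j := by linear_combination h
lemma hsub_add (j : Fin (m+4)) : j - 1 + 1 = j := by ring
end ff
lemma pne1 {N : ℕ} {p q r s : Fin N} (h : p ≠ r) : (p, q) ≠ (r, s) :=
  fun he => h (congrArg Prod.fst he)
lemma pne2 {N : ℕ} {p q r s : Fin N} (h : q ≠ s) : (p, q) ≠ (r, s) :=
  fun he => h (congrArg Prod.snd he)

lemma key (m : ℕ) (S : Finset (Fin (m+4) × Fin (m+4)))
    (hD : ∀ j : Fin (m+4), ((j, j) : Fin (m+4) × Fin (m+4)) ∈ S)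
    (hT : ∀ j : Fin (m+4), ((j + 1, j) : Fin (m+4) × Fin (m+4)) ∈ S) :
    weakRes 3 S := by
  have hT' : ∀ j : Fin (m+4), ((j, j - 1) : Fin (m+4) × Fin (m+4)) ∈ S := by
    intro j; have := hT (j - 1); rwa [hsub_add] at this
  rintro ⟨a, b⟩ ⟨c, d⟩ hxy
  by_cases hac : a = c
  · subst hac
    have hbd : b ≠ d := fun h => hxy (by rw [h])
    by_cases hba : b = a
    · subst hba
      -- x = (b,b), y = (b,d); rename: a := b
      have G1 : 2 ≤ g (b, b) (b, d) (b, b) :=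
        g_two rfl (Or.inl rfl) (pne2 (Ne.symm hbd))
      have G2 : 1 ≤ g (b, b) (b, d) (d, d) :=
        g_one' (not_or.mpr ⟨hbd, hbd⟩) (Or.inr rfl)
      exact wit2 S (hD b) (hD d) (pne1 hbd) (by omega)
    · by_cases hda : d = a
      · subst hda
        -- x = (d,b), y = (d,d)
        have G1 : 2 ≤ g (d, b) (d, d) (d, d) :=
          g_two' rfl (Or.inl rfl) (pne2 hbd)
        have G2 : 1 ≤ g (d, b) (d, d) (b, b) :=
          g_one (Or.inr rfl) (not_or.mpr ⟨(Ne.symm hbd), (Ne.symm hbd)⟩)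
        exact wit2 S (hD d) (hD b) (pne1 (Ne.symm hbd)) (by omega)
      · -- I.a : b ≠ a, d ≠ a
        have G1 : 1 ≤ g (a, b) (a, d) (b, b) :=
          g_one (Or.inr rfl) (not_or.mpr ⟨fun h => hba h.symm, (Ne.symm hbd)⟩)
        have G2 : 1 ≤ g (a, b) (a, d) (d, d) :=
          g_one' (not_or.mpr ⟨fun h => hda h.symm, hbd⟩) (Or.inr rfl)
        by_cases hb1 : b = a - 1
        · have hd1 : d ≠ a - 1 := fun h => hbd (hb1.trans h.symm)
          have G3 : 1 ≤ g (a, b) (a, d) (d + 1, d) :=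
            g_one' (not_or.mpr ⟨fun h => hd1 (hshift h), hbd⟩) (Or.inr rfl)
          refine wit3 S (hD b) (hD d) (hT d) (pne1 hbd) (pne2 hbd) (pne1 (hsucc' d)) (by omega)
        · have G3 : 1 ≤ g (a, b) (a, d) (b + 1, b) :=
            g_one (Or.inr rfl) (not_or.mpr ⟨fun h => hb1 (hshift h), (Ne.symm hbd)⟩)
          refine wit3 S (hD b) (hD d) (hT b) (pne1 hbd) (pne1 (hsucc' b)) (pne2 (Ne.symm hbd)) (by omega)
  · by_cases hbd : b = d
    · subst hbd
      -- x = (a,b), y = (c,b), a ≠ c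
      by_cases hab : a = b
      · subst hab
        -- x = (a,a), y = (c,a)
        have G1 : 2 ≤ g (a, a) (c, a) (a, a) :=
          g_two rfl (Or.inr rfl) (pne1 (Ne.symm hac))
        have G2 : 1 ≤ g (a, a) (c, a) (c, c) :=
          g_one' (not_or.mpr ⟨hac, hac⟩) (Or.inl rfl)
        exact wit2 S (hD a) (hD c) (pne1 hac) (by omega)
      · by_cases hcb : c = b
        · subst hcb
          -- x = (a,c), y = (c,c)
          have G1 : 2 ≤ g (a, c) (c, c) (c, c) :=
            g_two' rfl (Or.inr rfl) (pne1 hac)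
          have G2 : 1 ≤ g (a, c) (c, c) (a, a) :=
            g_one (Or.inl rfl) (not_or.mpr ⟨(Ne.symm hac), (Ne.symm hac)⟩)
          exact wit2 S (hD c) (hD a) (pne1 (Ne.symm hac)) (by omega)
        · -- II.a : a ≠ b, c ≠ b
          have G1 : 1 ≤ g (a, b) (c, b) (a, a) :=
            g_one (Or.inl rfl) (not_or.mpr ⟨fun h => hac h.symm, fun h => hab h.symm⟩)
          have G2 : 1 ≤ g (a, b) (c, b) (c, c) :=
            g_one' (not_or.mpr ⟨hac, fun h => hcb h.symm⟩) (Or.inl rfl)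
          by_cases hba1 : b = a - 1
          · have hbc1 : b ≠ c - 1 := by
              intro h
              exact hac (hsubinj (hba1.symm.trans h))
            have G3 : 1 ≤ g (a, b) (c, b) (c, c - 1) :=
              g_one' (not_or.mpr ⟨hac, fun h => hbc1 h⟩) (Or.inl rfl)
            refine wit3 S (hD a) (hD c) (hT' c) (pne1 hac) (pne1 hac) (pne2 (hpred' c)) (by omega)
          · have G3 : 1 ≤ g (a, b) (c, b) (a, a - 1) :=
              g_one (Or.inl rfl) (not_or.mpr ⟨fun h => hac h.symm, fun h => hba1 h⟩)
            refine wit3 S (hD a) (hD c) (hT' a) (pne1 hac) (pne2 (hpred' a)) (pne1 (fun h => hac h.symm)) (by omega)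
    · -- Case III : a ≠ c, b ≠ d
      by_cases had : a = d
      · by_cases hbc : b = c
        · -- transpose: x = (a,b), y = (b,a), a ≠ b
          subst hbc; subst had
          have hab : a ≠ b := hac
          by_cases hab1 : a = b + 1
          · have G1 : 1 ≤ g (a, b) (b, a) (b + 1, b) :=
              g_one (Or.inr rfl) (not_or.mpr ⟨hsucc' b, fun h => hab h⟩)
            have G2 : 1 ≤ g (a, b) (b, a) (a + 1, a) :=
              g_one' (not_or.mpr ⟨hsucc' a, fun h => hab h.symm⟩) (Or.inr rfl)
            have G3 : 1 ≤ g (a, b) (b, a) (b, b - 1) :=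
              g_one' (not_or.mpr ⟨fun h => hab h, hpred' b⟩) (Or.inl rfl)
            refine wit3 S (hT b) (hT a) (hT' b) (pne2 (Ne.symm hab)) (pne2 (hpred' b)) ?_ (by omega)
            · exact pne2 (fun h : a = b - 1 => hpm b (hab1.symm.trans h))
          · have G1 : 1 ≤ g (a, b) (b, a) (b + 1, b) :=
              g_one (Or.inr rfl) (not_or.mpr ⟨hsucc' b, fun h => hab h⟩)
            have G2 : 1 ≤ g (a, b) (b, a) (a + 1, a) :=
              g_one' (not_or.mpr ⟨hsucc' a, fun h => hab h.symm⟩) (Or.inr rfl)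
            have G3 : 1 ≤ g (a, b) (b, a) (a, a - 1) :=
              g_one (Or.inl rfl) (not_or.mpr ⟨fun h => hab h.symm, hpred' a⟩)
            refine wit3 S (hT b) (hT a) (hT' a) (pne2 (Ne.symm hab)) (pne1 (fun h => hab1 h.symm)) (pne2 (hpred' a)) (by omega)
        · -- III.2 : a = d, b ≠ c, b ≠ a
          subst had
          have hba : b ≠ a := fun h => hbd h
          have G1 : 1 ≤ g (a, b) (c, a) (b, b) :=
            g_one (Or.inr rfl) (not_or.mpr ⟨fun h => hbc h.symm, fun h => hba h.symm⟩)
          have G2 : 1 ≤ g (a, b) (c, a) (c, c) :=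
            g_one' (not_or.mpr ⟨hac, hbc⟩) (Or.inl rfl)
          have G3 : 1 ≤ g (a, b) (c, a) (a, a - 1) :=
            g_one (Or.inl rfl) (not_or.mpr ⟨fun h => hac h.symm, hpred' a⟩)
          refine wit3 S (hD b) (hD c) (hT' a) (pne1 hbc) (pne1 hba) (pne1 (fun h => hac h.symm)) (by omega)
      · by_cases hbc : b = c
        · -- III.3 : b = c, a ≠ d, a ≠ b
          subst hbc
          have hab : a ≠ b := hac
          have G1 : 1 ≤ g (a, b) (b, d) (a, a) :=
            g_one (Or.inl rfl) (not_or.mpr ⟨fun h => hab h.symm, fun h => had h.symm⟩)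
          have G2 : 1 ≤ g (a, b) (b, d) (d, d) :=
            g_one' (not_or.mpr ⟨had, hbd⟩) (Or.inr rfl)
          have G3 : 1 ≤ g (a, b) (b, d) (b + 1, b) :=
            g_one (Or.inr rfl) (not_or.mpr ⟨hsucc' b, (Ne.symm hbd)⟩)
          refine wit3 S (hD a) (hD d) (hT b) (pne1 had) (pne2 (fun h => hab h)) (pne2 (Ne.symm hbd)) (by omega)
        · -- III.4 : a,c and b,d and a,d and b,c all distinct
          by_cases hab : a = b
          · by_cases hcd : c = d
            · -- III.4.iii : x = (a,a), y = (c,c)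
              subst hab; subst hcd
              have G1 : 1 ≤ g (a, a) (c, c) (a, a) :=
                g_one (Or.inl rfl) (not_or.mpr ⟨fun h => hac h.symm, fun h => had h.symm⟩)
              have G2 : 1 ≤ g (a, a) (c, c) (c, c) :=
                g_one' (not_or.mpr ⟨hac, hbc⟩) (Or.inl rfl)
              by_cases hca1 : c = a + 1
              · have G3 : 1 ≤ g (a, a) (c, c) (a, a - 1) :=
                  g_one (Or.inl rfl)
                    (not_or.mpr ⟨fun h => hac h.symm, fun h => hpm a ((hca1.symm.trans h).symm ▸ rfl)⟩)
                refine wit3 S (hD a) (hD c) (hT' a) (pne1 hac) (pne2 (hpred' a)) (pne1 (fun h => hac h.symm)) (by omega)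
              · have G3 : 1 ≤ g (a, a) (c, c) (a + 1, a) :=
                  g_one (Or.inr rfl) (not_or.mpr ⟨fun h => hca1 h, fun h => hac h.symm⟩)
                refine wit3 S (hD a) (hD c) (hT a) (pne1 hac) (pne1 (hsucc' a)) (pne1 (fun h => hca1 h)) (by omega)
            · -- III.4.ii : a = b, c ≠ d
              subst hab
              have G1 : 1 ≤ g (a, a) (c, d) (a, a) :=
                g_one (Or.inl rfl) (not_or.mpr ⟨fun h => hac h.symm, fun h => had h.symm⟩)
              have G2 : 1 ≤ g (a, a) (c, d) (c, c) :=
                g_one' (not_or.mpr ⟨hac, hbc⟩) (Or.inl rfl)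
              have G3 : 1 ≤ g (a, a) (c, d) (d, d) :=
                g_one' (not_or.mpr ⟨had, hbd⟩) (Or.inr rfl)
              refine wit3 S (hD a) (hD c) (hD d) (pne1 hac) (pne1 had) (pne1 hcd) (by omega)
          · -- III.4.i : a ≠ b
            have G1 : 1 ≤ g (a, b) (c, d) (a, a) :=
              g_one (Or.inl rfl) (not_or.mpr ⟨fun h => hac h.symm, fun h => had h.symm⟩)
            have G2 : 1 ≤ g (a, b) (c, d) (b, b) :=
              g_one (Or.inr rfl) (not_or.mpr ⟨fun h => hbc h.symm, fun h => hbd h.symm⟩)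
            have G3 : 1 ≤ g (a, b) (c, d) (c, c) :=
              g_one' (not_or.mpr ⟨hac, hbc⟩) (Or.inl rfl)
            refine wit3 S (hD a) (hD b) (hD c) (pne1 hab) (pne1 hac) (pne1 hbc) (by omega)

lemma fin_succ_iff {m : ℕ} (p q : Fin (m+4)) :
    ((p : ℕ) = (q : ℕ) + 1 ∨ ((p : ℕ) = 0 ∧ (q : ℕ) = m + 4 - 1)) ↔ p = q + 1 := by
  have hq := q.isLt
  have hp := p.isLt
  have hval : ((q + 1 : Fin (m+4)) : ℕ) = ((q : ℕ) + 1) % (m + 4) := by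
    simp [Fin.add_def]
  rw [Fin.ext_iff, hval]
  rcases Nat.lt_or_ge ((q : ℕ) + 1) (m + 4) with h | h
  · rw [Nat.mod_eq_of_lt h]; omega
  · have hq3 : (q : ℕ) = m + 3 := by omega
    have h0 : ((q : ℕ) + 1) % (m + 4) = 0 := by
      rw [hq3, show m + 3 + 1 = m + 4 from by omega]; exact Nat.mod_self _
    rw [h0]; omega

theorem stmt_8 (n : ℕ) (hn : 4 ≤ n) :
    let S : Finset (Fin n × Fin n) :=
      Finset.univ.filter (fun p => p.1 = p.2 ∨ (p.1 : ℕ) = (p.2 : ℕ) + 1 ∨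
        ((p.1 : ℕ) = 0 ∧ (p.2 : ℕ) = n - 1))
    weakRes 3 S ∧ S.card = 2 * n := by
  intro S
  obtain ⟨m, rfl⟩ : ∃ m, n = m + 4 := ⟨n - 4, by omega⟩
  have hmem : ∀ p : Fin (m+4) × Fin (m+4),
      p ∈ S ↔ (p.1 = p.2 ∨ p.1 = p.2 + 1) := by
    intro p
    simp only [S, mem_filter, mem_univ, true_and]
    exact or_congr Iff.rfl (fin_succ_iff p.1 p.2)
  constructor
  · exact key m S (fun j => (hmem (j, j)).mpr (Or.inl rfl))
      (fun j => (hmem (j + 1, j)).mpr (Or.inr rfl))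
  · have hS : S = ((univ.image fun j : Fin (m+4) => (j, j)) ∪
        (univ.image fun j : Fin (m+4) => (j + 1, j))) := by
      ext p
      rw [mem_union, hmem]
      simp only [mem_image, mem_univ, true_and, Prod.ext_iff]
      constructor
      · rintro (h | h)
        · exact Or.inl ⟨p.2, h.symm, rfl⟩
        · exact Or.inr ⟨p.2, h.symm, rfl⟩
      · rintro (⟨j, h1, h2⟩ | ⟨j, h1, h2⟩)
        · exact Or.inl (by rw [← h1, ← h2])
        · exact Or.inr (by rw [← h1, ← h2])
    rw [hS, card_union_of_disjoint, card_image_of_injective _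
        (fun i j h => ((Prod.mk.injEq _ _ _ _).mp h).1),
      card_image_of_injective _ (fun i j h => ((Prod.mk.injEq _ _ _ _).mp h).2),
      card_univ, Fintype.card_fin]
    · ring
    · rw [disjoint_left]
      rintro ⟨p1, p2⟩ hp hq
      simp only [mem_image, mem_univ, true_and, Prod.ext_iff] at hp hq
      obtain ⟨j, hj1, hj2⟩ := hp
      obtain ⟨k, hk1, hk2⟩ := hq
      subst hk2
      exact hsucc k (hk1.trans (hj1.symm.trans hj2))
end

section
/- For every integer n ≥ 4 and k ∈ {2n+1, 2n+2}, the weak k-metric dimension of K_n × K_n equals n², i.e., the only weak k-resolving set is the full vertex set. -/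
open Finset

lemma sum_Lh {n : ℕ} (j : Fin n) (f : Fin n × Fin n → ℕ) :
    ∑ z ∈ Lh j, f z = ∑ t : Fin n, f (t, j) := by
  have h : Lh j = univ.image (fun t : Fin n => (t, j)) := by
    ext ⟨p, q⟩
    simp [Lh, Prod.ext_iff, eq_comm]
  rw [h, Finset.sum_image (by intro x _ y _ h; simpa [Prod.ext_iff] using h)]

lemma Lh_disj {n : ℕ} {j j' : Fin n} (h : j ≠ j') : Disjoint (Lh j) (Lh j') := by
  simp only [Finset.disjoint_left, Lh, Finset.mem_filter]
  rintro ⟨t, s⟩ ⟨-, h1⟩ ⟨-, h2⟩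
  exact h (h1 ▸ h2)

lemma sum_ite_const {n : ℕ} (c : Fin n) (u v : ℕ) :
    ∑ t : Fin n, (if t = c then u else v) = u + (n - 1) * v := by
  rw [Finset.sum_ite, Finset.sum_const, Finset.sum_const,
    Finset.filter_eq', if_pos (mem_univ c), Finset.card_singleton]
  have : (univ.filter (fun t : Fin n => ¬ t = c)).card = n - 1 := by
    rw [Finset.filter_not, Finset.filter_eq', if_pos (mem_univ c)]
    rw [Finset.card_sdiff_of_subset (by simp)]
    simp
  rw [this]
  ring

lemma sum_ite_two {n : ℕ} {a c : Fin n} (hac : a ≠ c) :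
    ∑ t : Fin n, (if t = a then 1 else if t = c then 1 else 0 : ℕ) = 2 := by
  have h : ∀ t : Fin n, (if t = a then 1 else if t = c then 1 else 0 : ℕ)
      = (if t = a then 1 else 0) + (if t = c then 1 else 0) := by
    intro t
    by_cases h1 : t = a <;> by_cases h2 : t = c <;> simp_all
  simp only [h]
  rw [Finset.sum_add_distrib, Finset.sum_ite_eq' univ a, Finset.sum_ite_eq' univ c]
  simp

lemma delS_swap {n : ℕ} (x y : Fin n × Fin n) :
    delS univ x.swap y.swap = delS univ x y := by
  unfold delS
  apply Finset.sum_equiv (Equiv.prodComm (Fin n) (Fin n)) (by simp)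
  intro z _
  have hd : ∀ w : Fin n × Fin n, dd w ((Equiv.prodComm (Fin n) (Fin n)) z) = dd w.swap z := by
    intro w
    obtain ⟨w1, w2⟩ := w; obtain ⟨z1, z2⟩ := z
    simp [dd, Prod.ext_iff, and_comm]
    by_cases h1 : w1 = z2 <;> by_cases h2 : w2 = z1 <;> simp [h1, h2]
  rw [hd x, hd y]

lemma key1 {n : ℕ} (a b d : Fin n) (hbd : b ≠ d) :
    delS univ (a, b) (a, d) = 2 * n + 2 := by
  unfold delS
  rw [← Finset.sum_filter_add_sum_filter_not univ (fun z : Fin n × Fin n => z.2 = b ∨ z.2 = d)]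
  have h2 : ∑ z ∈ univ.filter (fun z : Fin n × Fin n => ¬(z.2 = b ∨ z.2 = d)),
      ((dd (a, b) z : ℤ) - (dd (a, d) z : ℤ)).natAbs = 0 := by
    apply Finset.sum_eq_zero
    intro z hz
    obtain ⟨t, s⟩ := z
    simp only [Finset.mem_filter, not_or] at hz
    obtain ⟨-, hsb, hsd⟩ := hz
    have e1 : dd (a, b) (t, s) = dd (a, d) (t, s) := by
      by_cases h : a = t <;>
        simp [dd, Prod.ext_iff, h, Ne.symm hsb, Ne.symm hsd]
    rw [e1, sub_self, Int.natAbs_zero]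
  rw [h2, add_zero]
  have h1 : univ.filter (fun z : Fin n × Fin n => z.2 = b ∨ z.2 = d) = Lh b ∪ Lh d := by
    rw [Finset.filter_or]; rfl
  rw [h1, Finset.sum_union (Lh_disj hbd)]
  rw [sum_Lh, sum_Lh]
  have e1 : ∀ t : Fin n, ((dd (a, b) (t, b) : ℤ) - (dd (a, d) (t, b) : ℤ)).natAbs
      = if t = a then 2 else 1 := by
    intro t
    by_cases h : t = a
    · simp [dd, Prod.ext_iff, h, hbd, Ne.symm hbd]
    · simp [dd, Prod.ext_iff, h, Ne.symm h, hbd, Ne.symm hbd]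
  have e2 : ∀ t : Fin n, ((dd (a, b) (t, d) : ℤ) - (dd (a, d) (t, d) : ℤ)).natAbs
      = if t = a then 2 else 1 := by
    intro t
    by_cases h : t = a
    · simp [dd, Prod.ext_iff, h, hbd, Ne.symm hbd]
    · simp [dd, Prod.ext_iff, h, Ne.symm h, hbd, Ne.symm hbd]
  rw [Finset.sum_congr rfl (fun t _ => e1 t), Finset.sum_congr rfl (fun t _ => e2 t),
    sum_ite_const]
  have := a.pos
  omega

lemma key3 {n : ℕ} (hn : 4 ≤ n) (a b c d : Fin n) (hac : a ≠ c) (hbd : b ≠ d) :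
    2 * n + 2 ≤ delS univ (a, b) (c, d) := by
  have hcard : 1 < ((univ : Finset (Fin n)) \ {b, d}).card := by
    have h1 : ({b, d} : Finset (Fin n)).card ≤ 2 := by
      apply le_trans (Finset.card_insert_le _ _); simp
    rw [Finset.card_sdiff_of_subset (Finset.subset_univ _), Finset.card_univ, Fintype.card_fin]
    omega
  obtain ⟨e, he, e', he', hee'⟩ := Finset.one_lt_card.mp hcard
  simp only [Finset.mem_sdiff, Finset.mem_univ, true_and, Finset.mem_insert,
    Finset.mem_singleton, not_or] at he he'
  obtain ⟨heb, hed⟩ := he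
  obtain ⟨heb', hed'⟩ := he'
  have hsub : ∑ z ∈ Lh b ∪ Lh d ∪ Lh e ∪ Lh e',
      ((dd (a, b) z : ℤ) - (dd (c, d) z : ℤ)).natAbs ≤ delS univ (a, b) (c, d) :=
    Finset.sum_le_sum_of_subset (Finset.subset_univ _)
  refine le_trans ?_ hsub
  rw [Finset.sum_union (by
      refine Finset.disjoint_union_left.mpr ⟨Finset.disjoint_union_left.mpr ⟨?_, ?_⟩, ?_⟩
      · exact Lh_disj (fun h => heb' h.symm)
      · exact Lh_disj (fun h => hed' h.symm)
      · exact Lh_disj hee'),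
    Finset.sum_union (by
      refine Finset.disjoint_union_left.mpr ⟨?_, ?_⟩
      · exact Lh_disj (fun h => heb h.symm)
      · exact Lh_disj (fun h => hed h.symm)),
    Finset.sum_union (Lh_disj hbd), sum_Lh, sum_Lh, sum_Lh, sum_Lh]
  have erowb : ∀ t : Fin n, ((dd (a, b) (t, b) : ℤ) - (dd (c, d) (t, b) : ℤ)).natAbs
      = if t = c then 0 else 1 := by
    intro t
    by_cases h1 : t = a
    · subst h1
      simp [dd, Prod.ext_iff, hac, Ne.symm hac, hbd, Ne.symm hbd]
    · by_cases h2 : t = c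
      · subst h2
        simp [dd, Prod.ext_iff, Ne.symm h1, hbd, Ne.symm hbd]
      · simp [dd, Prod.ext_iff, h1, h2, Ne.symm h1, Ne.symm h2, hbd, Ne.symm hbd]
  have erowd : ∀ t : Fin n, ((dd (a, b) (t, d) : ℤ) - (dd (c, d) (t, d) : ℤ)).natAbs
      = if t = a then 0 else 1 := by
    intro t
    by_cases h1 : t = a
    · subst h1
      simp [dd, Prod.ext_iff, hac, Ne.symm hac, hbd, Ne.symm hbd]
    · by_cases h2 : t = c
      · subst h2
        simp [dd, Prod.ext_iff, Ne.symm h1, h1, hbd, Ne.symm hbd, Ne.symm hac]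
      · simp [dd, Prod.ext_iff, h1, h2, Ne.symm h1, Ne.symm h2, hbd, Ne.symm hbd]
  have erowgen : ∀ s : Fin n, s ≠ b → s ≠ d → ∀ t : Fin n,
      ((dd (a, b) (t, s) : ℤ) - (dd (c, d) (t, s) : ℤ)).natAbs
      = if t = a then 1 else if t = c then 1 else 0 := by
    intro s hsb hsd t
    by_cases h1 : t = a
    · subst h1
      simp [dd, Prod.ext_iff, hac, Ne.symm hac, Ne.symm hsb, Ne.symm hsd]
    · by_cases h2 : t = c
      · subst h2
        simp [dd, Prod.ext_iff, Ne.symm h1, h1, Ne.symm hsb, Ne.symm hsd]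
      · simp [dd, Prod.ext_iff, h1, h2, Ne.symm h1, Ne.symm h2, Ne.symm hsb, Ne.symm hsd]
  rw [Finset.sum_congr rfl (fun t _ => erowb t),
    Finset.sum_congr rfl (fun t _ => erowd t),
    Finset.sum_congr rfl (fun t _ => erowgen e heb hed t),
    Finset.sum_congr rfl (fun t _ => erowgen e' heb' hed' t),
    sum_ite_const, sum_ite_const, sum_ite_two hac]
  omega

lemma lower {n : ℕ} (hn : 4 ≤ n) (x y : Fin n × Fin n) (h : x ≠ y) :
    2 * n + 2 ≤ delS univ x y := by
  obtain ⟨a, b⟩ := x; obtain ⟨c, d⟩ := y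
  by_cases h1 : a = c
  · subst h1
    have hbd : b ≠ d := fun hh => h (by rw [hh])
    exact le_of_eq (key1 a b d hbd).symm
  · by_cases h2 : b = d
    · subst h2
      rw [← delS_swap (a, b) (c, b)]
      exact le_of_eq (key1 b a c h1).symm
    · exact key3 hn a b c d h1 h2

lemma forced {n : ℕ} (hn : 4 ≤ n) (k : ℕ) (hk : 2 * n + 1 ≤ k)
    (S : Finset (Fin n × Fin n)) (hS : weakRes k S) : S = Finset.univ := by
  by_contra hne
  have hex : ∃ x, x ∉ S := by
    by_contra hall
    push_neg at hall
    exact hne (Finset.eq_univ_iff_forall.mpr hall)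
  obtain ⟨⟨a, b⟩, hx⟩ := hex
  haveI : Nontrivial (Fin n) := Fin.nontrivial_iff_two_le.mpr (by omega)
  obtain ⟨d, hd⟩ := exists_ne b
  have hne2 : ((a, b) : Fin n × Fin n) ≠ (a, d) := by
    intro hcontr
    exact hd (congrArg Prod.snd hcontr).symm
  have hres := hS (a, b) (a, d) hne2
  have hsub : S ⊆ univ.erase (a, b) := fun z hz =>
    Finset.mem_erase.mpr ⟨fun h => hx (h ▸ hz), Finset.mem_univ z⟩
  have h1 : delS S (a, b) (a, d) ≤ delS (univ.erase (a, b)) (a, b) (a, d) :=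
    Finset.sum_le_sum_of_subset hsub
  have h2 : delS (univ.erase (a, b)) (a, b) (a, d)
      + ((dd (a, b) (a, b) : ℤ) - (dd (a, d) (a, b) : ℤ)).natAbs
      = delS univ (a, b) (a, d) :=
    Finset.sum_erase_add _ _ (Finset.mem_univ _)
  have h3 : ((dd (a, b) (a, b) : ℤ) - (dd (a, d) (a, b) : ℤ)).natAbs = 2 := by
    simp [dd, Prod.ext_iff, hd, Ne.symm hd]
  have h4 := key1 a b d (Ne.symm hd)
  omega

theorem stmt_10 (n : ℕ) (hn : 4 ≤ n) (k : ℕ) (hk : k = 2 * n + 1 ∨ k = 2 * n + 2) :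
    wdim n k = n ^ 2 ∧
      ∀ S : Finset (Fin n × Fin n), weakRes k S → S = Finset.univ := by
  have hk1 : 2 * n + 1 ≤ k := by omega
  have hk2 : k ≤ 2 * n + 2 := by omega
  have hres_univ : weakRes k (univ : Finset (Fin n × Fin n)) := by
    intro x y hxy
    exact le_trans (by omega) (lower hn x y hxy)
  have hcard : (univ : Finset (Fin n × Fin n)).card = n ^ 2 := by
    simp only [Finset.card_univ, Fintype.card_prod, Fintype.card_fin]
    ring
  refine ⟨?_, fun S hS => forced hn k hk1 S hS⟩
  have hset : {m | ∃ S : Finset (Fin n × Fin n), weakRes k S ∧ S.card = m} = {n ^ 2} := by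
    ext m
    simp only [Set.mem_setOf_eq, Set.mem_singleton_iff]
    constructor
    · rintro ⟨S, hS, rfl⟩
      rw [forced hn k hk1 S hS, hcard]
    · rintro rfl
      exact ⟨univ, hres_univ, hcard⟩
  rw [wdim, hset]
  exact csInf_singleton _
end
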